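/- arXiv:2112.10480 — 4 statements merged into one kernel-verified Lean document; each statement's English description precedes it below -/
import Mathlib

section
/- In a 2-dimensional real normed space X, strict convexity is equivalent to the property that any two linearly independent smooth points of X have linearly independent support functionals. (Here a nonzero point z is smooth if it has a unique support functional, i.e. a unique linear functional f with f(z) = ‖z‖² and sup over the unit sphere of f equal to ‖z‖; X is strictly convex if every linear functional is the support functional of exactly one point.) -/
open Module

/-- A support functional of `z` is a linear functional `f` with `f z = ‖z‖²`
and `sup_{‖x‖=1} f x = ‖z‖`. -/
def IsSupportFunctional {X : Type*} [NormedAddCommGroup X] [NormedSpace ℝ X]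
    (f : X →ₗ[ℝ] ℝ) (z : X) : Prop :=
  f z = ‖z‖ ^ 2 ∧ sSup (⇑f '' {x : X | ‖x‖ = 1}) = ‖z‖

/-- A nonzero point is smooth if it has exactly one support functional. -/
def IsSmoothPoint {X : Type*} [NormedAddCommGroup X] [NormedSpace ℝ X] (z : X) : Prop :=
  z ≠ 0 ∧ ∃! f : X →ₗ[ℝ] ℝ, IsSupportFunctional f z

/-- `X` is strictly convex if every linear functional is the support functional of
exactly one point of `X`. -/
def IsStrictlyConvexNormed (X : Type*) [NormedAddCommGroup X] [NormedSpace ℝ X] : Prop :=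
  ∀ g : X →ₗ[ℝ] ℝ, ∃! z : X, IsSupportFunctional g z

/-!
Scaling turns a support pair `(f, z)` into `(c • f, c • z)`, so under strict convexity
proportional functionals can only support proportional points.

Conversely, if `g` supports two distinct points `z ≠ z'`, then it supports the whole segment
`[z, z']`, which lies on a sphere. A support functional at a point of the open segment must
agree with `g` at `z` and `z'`, which span the plane, so these points are smooth; two of them
are independent smooth points sharing the support functional `g`.
-/

section SupportFunctional

open scoped Pointwise

variable {X : Type*} [NormedAddCommGroup X] [NormedSpace ℝ X] {f f₁ f₂ : X →ₗ[ℝ] ℝ}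
  {z z' z₁ z₂ w : X}

theorem IsSupportFunctional.smul (hf : IsSupportFunctional f z) (c : ℝ) :
    IsSupportFunctional (c • f) (c • z) := by
  have himage : ⇑(c • f) '' {x : X | ‖x‖ = 1} = |c| • (⇑f '' {x : X | ‖x‖ = 1}) := by
    rw [← Set.image_smul, Set.image_image]
    rcases abs_choice c with hc | hc <;> rw [hc]
    · rfl
    · ext y
      constructor <;> rintro ⟨x, hx, rfl⟩ <;> exact ⟨-x, by simpa using hx, by simp⟩
  refine ⟨?_, ?_⟩
  · simp only [LinearMap.smul_apply, map_smul, smul_eq_mul, hf.1, norm_smul, Real.norm_eq_abs]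
    rw [mul_pow, sq_abs]
    ring
  · rw [himage, Real.sSup_smul_of_nonneg (abs_nonneg c), hf.2, norm_smul, Real.norm_eq_abs,
      smul_eq_mul]

theorem IsSupportFunctional.norm_eq (hz : IsSupportFunctional f z)
    (hz' : IsSupportFunctional f z') : ‖z‖ = ‖z'‖ :=
  hz.2.symm.trans hz'.2

theorem IsSupportFunctional.linearIndependent_pair (hz : IsSupportFunctional f z)
    (hz' : IsSupportFunctional f z') (hne : z ≠ z') : LinearIndependent ℝ ![z, z'] := by
  have hz0 : z ≠ 0 := by
    rintro rfl
    exact hne (norm_eq_zero.mp ((hz.norm_eq hz').symm.trans norm_zero)).symm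
  rw [LinearIndependent.pair_iff' hz0]
  rintro a rfl
  have hsq : a * ‖z‖ ^ 2 = ‖z‖ ^ 2 :=
    calc a * ‖z‖ ^ 2 = f (a • z) := by rw [map_smul, smul_eq_mul, hz.1]
      _ = ‖z‖ ^ 2 := by rw [hz'.1, ← hz.norm_eq hz']
  have ha : a = 1 := by
    have : ‖z‖ ^ 2 ≠ 0 := by positivity
    exact (mul_eq_right₀ this).mp hsq
  exact hne (by rw [ha, one_smul])

theorem IsStrictlyConvexNormed.linearIndependent_pair_of_isSupportFunctional
    (hX : IsStrictlyConvexNormed X) (hz : LinearIndependent ℝ ![z₁, z₂])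
    (hf₁ : IsSupportFunctional f₁ z₁) (hf₂ : IsSupportFunctional f₂ z₂) :
    LinearIndependent ℝ ![f₁, f₂] := by
  have hz₁ : z₁ ≠ 0 := hz.ne_zero 0
  have hf₁0 : f₁ ≠ 0 := by
    rintro rfl
    have : ‖z₁‖ ^ 2 ≠ 0 := by positivity
    exact this hf₁.1.symm
  rw [LinearIndependent.pair_iff' hf₁0]
  rintro c rfl
  exact (LinearIndependent.pair_iff' hz₁).mp hz c ((hX (c • f₁)).unique (hf₁.smul c) hf₂)

section FiniteDimensional

variable [FiniteDimensional ℝ X]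

theorem isCompact_setOf_norm_eq_one : IsCompact {x : X | ‖x‖ = 1} := by
  simpa only [Metric.sphere, dist_zero_right] using isCompact_sphere (0 : X) 1

theorem IsSupportFunctional.apply_le (hf : IsSupportFunctional f z) (x : X) :
    f x ≤ ‖z‖ * ‖x‖ := by
  rcases eq_or_ne x 0 with rfl | hx
  · simp
  have hbdd : BddAbove (⇑f '' {x : X | ‖x‖ = 1}) :=
    (isCompact_setOf_norm_eq_one.image f.continuous_of_finiteDimensional).bddAbove
  have hunit : f (‖x‖⁻¹ • x) ≤ ‖z‖ := hf.2 ▸ le_csSup hbdd ⟨_, norm_smul_inv_norm hx, rfl⟩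
  calc f x = ‖x‖ * f (‖x‖⁻¹ • x) := by
        rw [map_smul, smul_eq_mul, ← mul_assoc, mul_inv_cancel₀ (norm_ne_zero_iff.mpr hx),
          one_mul]
    _ ≤ ‖x‖ * ‖z‖ := mul_le_mul_of_nonneg_left hunit (norm_nonneg x)
    _ = ‖z‖ * ‖x‖ := mul_comm _ _

theorem exists_isSupportFunctional [Nontrivial X] (f : X →ₗ[ℝ] ℝ) :
    ∃ z, IsSupportFunctional f z := by
  obtain ⟨v, hv⟩ := exists_ne (0 : X)
  obtain ⟨x, hx, hsSup, hmax⟩ := isCompact_setOf_norm_eq_one.exists_sSup_image_eq_and_ge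
    ⟨_, norm_smul_inv_norm (𝕜 := ℝ) hv⟩ f.continuous_of_finiteDimensional.continuousOn
  have hM : 0 ≤ f x := by
    have : f (-x) ≤ f x := hmax (-x) (show ‖-x‖ = 1 by rwa [norm_neg])
    rw [map_neg] at this
    linarith
  have hnorm : ‖f x • x‖ = f x := by rw [norm_smul, Real.norm_of_nonneg hM, hx, mul_one]
  exact ⟨f x • x, by rw [map_smul, smul_eq_mul, hnorm, sq], by rw [hsSup, hnorm]⟩

theorem convex_setOf_isSupportFunctional (f : X →ₗ[ℝ] ℝ) :
    Convex ℝ {z | IsSupportFunctional f z} := by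
  intro z hz z' hz' a b ha hb hab
  have hz'z : ‖z'‖ = ‖z‖ := (hz.norm_eq hz').symm
  have hfw : f (a • z + b • z') = ‖z‖ ^ 2 := by
    simp only [map_add, map_smul, smul_eq_mul, hz.1, hz'.1, hz'z]
    linear_combination ‖z‖ ^ 2 * hab
  have hle : ‖a • z + b • z'‖ ≤ ‖z‖ := by
    calc ‖a • z + b • z'‖ ≤ ‖a • z‖ + ‖b • z'‖ := norm_add_le _ _
      _ = ‖z‖ := by
        rw [norm_smul, norm_smul, Real.norm_of_nonneg ha, Real.norm_of_nonneg hb, hz'z,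
          ← add_mul, hab, one_mul]
  have hge : ‖z‖ ^ 2 ≤ ‖z‖ * ‖a • z + b • z'‖ := hfw ▸ hz.apply_le _
  have hnorm : ‖a • z + b • z'‖ = ‖z‖ := by
    refine le_antisymm hle (not_lt.mp fun hlt => ?_)
    have : 0 < ‖z‖ := (norm_nonneg _).trans_lt hlt
    nlinarith
  exact ⟨by rw [hfw, hnorm], by rw [hz.2, hnorm]⟩

theorem IsSupportFunctional.apply_eq_of_mem_openSegment {f' : X →ₗ[ℝ] ℝ}
    (hz : IsSupportFunctional f z) (hz' : IsSupportFunctional f z')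
    (hw : w ∈ openSegment ℝ z z') (hf' : IsSupportFunctional f' w) :
    f' z = f z ∧ f' z' = f z' := by
  obtain ⟨a, b, ha, hb, hab, rfl⟩ := hw
  have hwf : IsSupportFunctional f (a • z + b • z') :=
    convex_setOf_isSupportFunctional f hz hz' ha.le hb.le hab
  have hwz : ‖a • z + b • z'‖ = ‖z‖ := hwf.norm_eq hz
  have hz'z : ‖z'‖ = ‖z‖ := (hz.norm_eq hz').symm
  have h₁ : f' z ≤ ‖z‖ ^ 2 := by simpa only [hwz, sq] using hf'.apply_le z
  have h₂ : f' z' ≤ ‖z‖ ^ 2 := by simpa only [hwz, hz'z, sq] using hf'.apply_le z'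
  have hsum : a * f' z + b * f' z' = ‖z‖ ^ 2 := by
    simpa only [map_add, map_smul, smul_eq_mul, hwz] using hf'.1
  rw [hz.1, hz'.1, hz'z]
  constructor <;> nlinarith

theorem isSmoothPoint_of_mem_openSegment (hX : finrank ℝ X = 2)
    (hz : IsSupportFunctional f z) (hz' : IsSupportFunctional f z') (hne : z ≠ z')
    (hw : w ∈ openSegment ℝ z z') : IsSmoothPoint w := by
  have hli := hz.linearIndependent_pair hz' hne
  have hwf : IsSupportFunctional f w :=
    (convex_setOf_isSupportFunctional f).openSegment_subset hz hz' hw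
  have hw0 : w ≠ 0 := by
    rw [← norm_ne_zero_iff, hwf.norm_eq hz, norm_ne_zero_iff]
    exact hli.ne_zero 0
  have hspan : Submodule.span ℝ (Set.range ![z, z']) = ⊤ :=
    hli.span_eq_top_of_card_eq_finrank (by simp [hX])
  refine ⟨hw0, f, hwf, fun f' hf' => LinearMap.ext_on_range hspan fun i => ?_⟩
  obtain ⟨h₁, h₂⟩ := hz.apply_eq_of_mem_openSegment hz' hw hf'
  fin_cases i
  exacts [h₁, h₂]

theorem exists_linearIndependent_smoothPoints (hX : finrank ℝ X = 2)
    (hz : IsSupportFunctional f z) (hz' : IsSupportFunctional f z') (hne : z ≠ z') :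
    ∃ w₁ w₂ : X, IsSmoothPoint w₁ ∧ IsSmoothPoint w₂ ∧ LinearIndependent ℝ ![w₁, w₂] ∧
      IsSupportFunctional f w₁ ∧ IsSupportFunctional f w₂ := by
  have hw₁ : (2 / 3 : ℝ) • z + (1 / 3 : ℝ) • z' ∈ openSegment ℝ z z' :=
    ⟨2 / 3, 1 / 3, by norm_num, by norm_num, by norm_num, rfl⟩
  have hw₂ : (1 / 3 : ℝ) • z + (2 / 3 : ℝ) • z' ∈ openSegment ℝ z z' :=
    ⟨1 / 3, 2 / 3, by norm_num, by norm_num, by norm_num, rfl⟩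
  have hconv := (convex_setOf_isSupportFunctional f).openSegment_subset hz hz'
  refine ⟨_, _, isSmoothPoint_of_mem_openSegment hX hz hz' hne hw₁,
    isSmoothPoint_of_mem_openSegment hX hz hz' hne hw₂, ?_, hconv hw₁, hconv hw₂⟩
  rw [LinearIndependent.pair_add_smul_add_smul_iff]
  exact ⟨hz.linearIndependent_pair hz' hne, by norm_num⟩

end FiniteDimensional

end SupportFunctional

/-- In a normed plane, strict convexity is equivalent to the property that any two
linearly independent smooth points have linearly independent support functionals. -/
theorem strictlyConvex_iff_smooth_points_have_linearIndependent_support_functionals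
    {X : Type*} [NormedAddCommGroup X] [NormedSpace ℝ X]
    (hX : finrank ℝ X = 2) :
    IsStrictlyConvexNormed X ↔
      ∀ z₁ z₂ : X, IsSmoothPoint z₁ → IsSmoothPoint z₂ →
        LinearIndependent ℝ ![z₁, z₂] →
        ∀ f₁ f₂ : X →ₗ[ℝ] ℝ, IsSupportFunctional f₁ z₁ → IsSupportFunctional f₂ z₂ →
          LinearIndependent ℝ ![f₁, f₂] := by
  have : FiniteDimensional ℝ X := Module.finite_of_finrank_eq_succ hX
  have : Nontrivial X := Module.nontrivial_of_finrank_pos (by omega : 0 < finrank ℝ X)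
  refine ⟨fun h z₁ z₂ _ _ hz f₁ f₂ hf₁ hf₂ =>
    h.linearIndependent_pair_of_isSupportFunctional hz hf₁ hf₂, fun h g => ?_⟩
  obtain ⟨z, hz⟩ := exists_isSupportFunctional g
  refine ⟨z, hz, fun z' hz' => by_contra fun hne => ?_⟩
  obtain ⟨w₁, w₂, hw₁, hw₂, hw, hgw₁, hgw₂⟩ :=
    exists_linearIndependent_smoothPoints hX hz' hz hne
  have hgg : LinearIndependent ℝ ![g, g] := h w₁ w₂ hw₁ hw₂ hw g g hgw₁ hgw₂
  exact absurd (hgg.injective (a₁ := 0) (a₂ := 1) rfl) (by decide)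
end

section
/- Every graph on at most 4 vertices containing two distinct vertices u and v is uv-sparse if and only if it does not contain the edge uv. In particular, every subgraph of K₄ − uv is uv-sparse. -/
/-!
Without the edge `uv`, a set `U` spans at most `C(|U|, 2)` edges, and one fewer if it contains
both `u` and `v`; for `|U| ≤ 4` this is within `val(U)`, with one to spare when `u, v ∈ U` and
`|U| ≥ 3`. A `uv`-compatible family either contains the whole vertex set, whose value is at most
that of the family, or consists of triangles `{u, v, w}`, of which there are at most two, and the
spare edge of each member pays for the correction `-2(k - 1)`. Conversely, the edge `uv` breaks
`i(U) ≤ val(U) = 0` for `U = {u, v}`.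
-/

open scoped Classical

/-- Number of edges of `G` induced by the vertex set `U`. -/
noncomputable def iG {V : Type*} [Fintype V] (G : SimpleGraph V) (U : Finset V) : ℕ :=
  (G.edgeFinset.filter (fun e => ∀ x ∈ e, x ∈ U)).card

/-- The value `val(U) = 2|U| - t_U`. -/
noncomputable def valU {V : Type*} [DecidableEq V] (u v : V) (U : Finset V) : ℤ :=
  2 * U.card - (if U = {u, v} then 4 else if U.card = 2 ∨ U.card = 3 then 3 else 2)

/-- A family of vertex sets is `uv`-compatible if each member contains `u` and `v`
and has at least three vertices. -/
def UVCompatible {V : Type*} (u v : V) (𝒳 : Finset (Finset V)) : Prop :=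
  𝒳.Nonempty ∧ ∀ A ∈ 𝒳, u ∈ A ∧ v ∈ A ∧ 3 ≤ A.card

/-- The value of a `uv`-compatible family. -/
noncomputable def valFam {V : Type*} [DecidableEq V] (u v : V) (𝒳 : Finset (Finset V)) : ℤ :=
  (∑ A ∈ 𝒳, valU u v A) - 2 * ((𝒳.card : ℤ) - 1)

/-- The number of edges of `G` covered by a family of vertex sets. -/
noncomputable def iFam {V : Type*} [Fintype V] (G : SimpleGraph V) (𝒳 : Finset (Finset V)) : ℕ :=
  (𝒳.biUnion (fun A => G.edgeFinset.filter (fun e => ∀ x ∈ e, x ∈ A))).card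

/-- `G` is `uv`-sparse. -/
noncomputable def UVSparse {V : Type*} [Fintype V] [DecidableEq V]
    (G : SimpleGraph V) (u v : V) : Prop :=
  (∀ U : Finset V, 2 ≤ U.card → (iG G U : ℤ) ≤ valU u v U) ∧
  (∀ 𝒳 : Finset (Finset V), UVCompatible u v 𝒳 → (iFam G 𝒳 : ℤ) ≤ valFam u v 𝒳)

/-- `G` is `(2,2)`-sparse. -/
def Sparse22 {V : Type*} [Fintype V] (G : SimpleGraph V) : Prop :=
  ∀ U : Finset V, 2 ≤ U.card → (iG G U : ℤ) ≤ 2 * U.card - 2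

namespace SimpleGraph

variable {V : Type*} [Fintype V]

lemma filter_edgeFinset_subset_image_offDiag (G : SimpleGraph V) (U : Finset V) :
    G.edgeFinset.filter (fun e => ∀ x ∈ e, x ∈ U) ⊆ U.offDiag.image Sym2.mk.uncurry := by
  intro e he
  induction e using Sym2.ind with
  | _ a b =>
    simp only [Finset.mem_filter, mem_edgeFinset, mem_edgeSet, Sym2.mem_iff,
      forall_eq_or_imp, forall_eq] at he
    exact Finset.mem_image.2 ⟨(a, b), Finset.mem_offDiag.2 ⟨he.2.1, he.2.2, he.1.ne⟩, rfl⟩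

lemma iG_le_choose_two (G : SimpleGraph V) (U : Finset V) : iG G U ≤ U.card.choose 2 :=
  (Finset.card_le_card (G.filter_edgeFinset_subset_image_offDiag U)).trans_eq
    (Sym2.card_image_offDiag U)

lemma iG_lt_choose_two (G : SimpleGraph V) {U : Finset V} {u v : V} (hu : u ∈ U) (hv : v ∈ U)
    (huv : u ≠ v) (hG : ¬ G.Adj u v) : iG G U < U.card.choose 2 := by
  refine (Finset.card_lt_card ?_).trans_eq (Sym2.card_image_offDiag U)
  refine (Finset.ssubset_iff_of_subset (G.filter_edgeFinset_subset_image_offDiag U)).2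
    ⟨s(u, v), Finset.mem_image.2 ⟨(u, v), Finset.mem_offDiag.2 ⟨hu, hv, huv⟩, rfl⟩, ?_⟩
  simp [hG]

lemma iG_pos {G : SimpleGraph V} {U : Finset V} {u v : V} (hadj : G.Adj u v) (hu : u ∈ U)
    (hv : v ∈ U) : 0 < iG G U :=
  Finset.card_pos.2 ⟨s(u, v), Finset.mem_filter.2 ⟨G.mem_edgeFinset.2 hadj, by simp [hu, hv]⟩⟩

lemma iFam_le_sum_iG (G : SimpleGraph V) (𝒳 : Finset (Finset V)) :
    iFam G 𝒳 ≤ ∑ A ∈ 𝒳, iG G A :=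
  Finset.card_biUnion_le

lemma iFam_le_iG_univ (G : SimpleGraph V) (𝒳 : Finset (Finset V)) :
    iFam G 𝒳 ≤ iG G Finset.univ :=
  Finset.card_le_card <| Finset.biUnion_subset.2 fun _ _ =>
    Finset.monotone_filter_right _ fun _ _ _ _ _ => Finset.mem_univ _

end SimpleGraph

lemma Finset.card_le_choose_of_forall_superset {α : Type*} [Fintype α] [DecidableEq α]
    {S : Finset α} {k : ℕ} {𝒳 : Finset (Finset α)} (h𝒳 : ∀ A ∈ 𝒳, S ⊆ A ∧ A.card = k) :
    𝒳.card ≤ (Fintype.card α - S.card).choose (k - S.card) := by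
  rw [← Finset.card_compl, ← Finset.card_powersetCard]
  refine Finset.card_le_card_of_injOn (· \ S) (fun A hA => ?_) (fun A hA B hB hAB => ?_)
  · obtain ⟨hSA, hA⟩ := h𝒳 A hA
    refine Finset.mem_powersetCard.2 ⟨fun x hx => ?_, by rw [Finset.card_sdiff_of_subset hSA, hA]⟩
    exact Finset.mem_compl.2 (Finset.mem_sdiff.1 hx).2
  · rw [← Finset.sdiff_union_of_subset (h𝒳 A hA).1, ← Finset.sdiff_union_of_subset (h𝒳 B hB).1]
    exact congrArg (· ∪ S) hAB

section

variable {V : Type*} [DecidableEq V] {u v : V}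

lemma Finset.ne_pair_of_three_le_card {U : Finset V} (hU : 3 ≤ U.card) : U ≠ {u, v} :=
  fun h => by
    have := h ▸ Finset.card_le_two (a := u) (b := v)
    omega

lemma valU_pair (huv : u ≠ v) : valU u v {u, v} = 0 := by
  simp [valU, Finset.card_pair huv]

lemma three_le_valU {U : Finset V} (hU : 3 ≤ U.card) : 3 ≤ valU u v U := by
  rw [valU, if_neg (Finset.ne_pair_of_three_le_card hU)]
  split_ifs <;> omega

lemma valFam_eq_sum_sub_two_add_two (𝒳 : Finset (Finset V)) :
    valFam u v 𝒳 = ∑ A ∈ 𝒳, (valU u v A - 2) + 2 := by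
  rw [valFam, Finset.sum_sub_distrib, Finset.sum_const, nsmul_eq_mul]
  ring

lemma valU_le_valFam {𝒳 : Finset (Finset V)} (h𝒳 : ∀ A ∈ 𝒳, 2 ≤ valU u v A) {A₀ : Finset V}
    (hA₀ : A₀ ∈ 𝒳) : valU u v A₀ ≤ valFam u v 𝒳 := by
  have := Finset.single_le_sum (f := fun A => valU u v A - 2)
    (fun A hA => sub_nonneg.2 (h𝒳 A hA)) hA₀
  rw [valFam_eq_sum_sub_two_add_two]
  linarith

end

namespace SimpleGraph

variable {V : Type*} [Fintype V] [DecidableEq V] {G : SimpleGraph V} {u v : V}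

lemma iG_le_valU_of_not_adj (huv : u ≠ v) (hG : ¬ G.Adj u v) {U : Finset V}
    (h2 : 2 ≤ U.card) (h4 : U.card ≤ 4) : (iG G U : ℤ) ≤ valU u v U := by
  by_cases hU : U = {u, v}
  · have := G.iG_lt_choose_two (U := {u, v}) (by simp) (by simp) huv hG
    rw [Finset.card_pair huv] at this
    rw [hU, valU_pair huv]
    simp_all
  · have := G.iG_le_choose_two U
    rw [Nat.choose_two_right] at this
    rw [valU, if_neg hU]
    interval_cases U.card <;> simp at this ⊢ <;> omega

lemma iG_lt_valU_of_not_adj (huv : u ≠ v) (hG : ¬ G.Adj u v) {A : Finset V}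
    (hu : u ∈ A) (hv : v ∈ A) (h3 : 3 ≤ A.card) (h4 : A.card ≤ 4) :
    (iG G A : ℤ) < valU u v A := by
  have := G.iG_lt_choose_two hu hv huv hG
  rw [Nat.choose_two_right] at this
  rw [valU, if_neg (Finset.ne_pair_of_three_le_card h3)]
  interval_cases A.card <;> simp at this ⊢ <;> omega

lemma iFam_le_valFam_of_not_adj (hV : Fintype.card V ≤ 4) (huv : u ≠ v) (hG : ¬ G.Adj u v)
    {𝒳 : Finset (Finset V)} (h𝒳 : ∀ A ∈ 𝒳, u ∈ A ∧ v ∈ A ∧ 3 ≤ A.card) :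
    (iFam G 𝒳 : ℤ) ≤ valFam u v 𝒳 := by
  have hlt : ∀ A ∈ 𝒳, (iG G A : ℤ) < valU u v A := fun A hA =>
    iG_lt_valU_of_not_adj huv hG (h𝒳 A hA).1 (h𝒳 A hA).2.1 (h𝒳 A hA).2.2
      ((Finset.card_le_univ A).trans hV)
  by_cases huniv : Finset.univ ∈ 𝒳
  · calc (iFam G 𝒳 : ℤ) ≤ iG G Finset.univ := by exact_mod_cast G.iFam_le_iG_univ 𝒳
      _ ≤ valU u v Finset.univ := (hlt _ huniv).le
      _ ≤ valFam u v 𝒳 := valU_le_valFam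
          (fun A hA => (three_le_valU (h𝒳 A hA).2.2).trans' (by norm_num)) huniv
  · have htriangles : ∀ A ∈ 𝒳, {u, v} ⊆ A ∧ A.card = 3 := fun A hA => by
      obtain ⟨hu, hv, h3⟩ := h𝒳 A hA
      refine ⟨Finset.insert_subset hu (Finset.singleton_subset_iff.2 hv), ?_⟩
      have := (Finset.card_lt_iff_ne_univ A).2 (ne_of_mem_of_not_mem hA huniv)
      omega
    have hk : 𝒳.card ≤ 2 := by
      have := Finset.card_le_choose_of_forall_superset htriangles
      rw [Finset.card_pair huv, Nat.choose_one_right] at this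
      omega
    calc (iFam G 𝒳 : ℤ) ≤ ∑ A ∈ 𝒳, (iG G A : ℤ) := by exact_mod_cast G.iFam_le_sum_iG 𝒳
      _ ≤ ∑ A ∈ 𝒳, ((valU u v A - 2) + 1) :=
          Finset.sum_le_sum fun A hA => by linarith [hlt A hA]
      _ = ∑ A ∈ 𝒳, (valU u v A - 2) + 𝒳.card := by simp [Finset.sum_add_distrib]
      _ ≤ valFam u v 𝒳 := by
          rw [valFam_eq_sum_sub_two_add_two]
          omega

end SimpleGraph

/-- A graph on at most 4 vertices with distinct vertices `u, v` is `uv`-sparse if and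
only if it does not contain the edge `uv`. In particular every subgraph of `K₄ - uv`
is `uv`-sparse. -/
theorem uvSparse_iff_not_adj_of_card_le_four {V : Type*} [Fintype V] [DecidableEq V]
    (hV : Fintype.card V ≤ 4) (u v : V) (huv : u ≠ v) :
    (∀ G : SimpleGraph V, (UVSparse G u v ↔ ¬ G.Adj u v)) ∧
    (∀ H : SimpleGraph V, H ≤ (⊤ : SimpleGraph V).deleteEdges {s(u, v)} →
      UVSparse H u v) := by
  have hiff : ∀ G : SimpleGraph V, UVSparse G u v ↔ ¬ G.Adj u v := fun G =>
    ⟨fun hG hadj => by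
      have := hG.1 {u, v} (Finset.card_pair huv).ge
      rw [valU_pair huv] at this
      have := G.iG_pos (U := {u, v}) hadj (by simp) (by simp)
      omega,
    fun hG => ⟨fun U h2 => G.iG_le_valU_of_not_adj huv hG h2 ((Finset.card_le_univ U).trans hV),
      fun 𝒳 h𝒳 => G.iFam_le_valFam_of_not_adj hV huv hG h𝒳.2⟩⟩
  refine ⟨hiff, fun H hH => (hiff H).2 fun hadj => ?_⟩
  exact (SimpleGraph.deleteEdges_adj.1 (hH hadj)).2 rfl
end

section
/- The graph G consisting of two copies of K₄ intersecting in a single vertex x, with u in one copy and v in the other (u, v, x distinct), is uv-tight: it is uv-sparse and has exactly 2|V| − 2 = 12 edges on its 7 vertices. -/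
open scoped Classical

/-!
Every single-set bound, and the pairwise statement below, is a finite check on the 12 explicit
edges. A `uv`-compatible family is handled by peeling: for distinct compatible sets `A ≠ B`,
either `|E(A) \ E(B)| ≤ val(A) - 2` or the same with `A` and `B` swapped. Removing that member
from the family loses at most `val - 2` covered edges, which is exactly what one member fewer
costs in `val(X)`, so induction on the family reduces the family bound to the single-set bound.
-/

open Finset

section Peeling

variable {α β : Type*} [DecidableEq α] [DecidableEq β] (E : α → Finset β)

lemma card_biUnion_le_card_sdiff_add_card_biUnion_erase {𝒳 : Finset α} {C D : α}
    (hD : D ∈ 𝒳) (hCD : C ≠ D) :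
    #(𝒳.biUnion E) ≤ #(E C \ E D) + #((𝒳.erase C).biUnion E) := by
  refine (card_le_card fun e he => ?_).trans (card_union_le _ _)
  obtain ⟨A, hA, heA⟩ := mem_biUnion.mp he
  by_cases hAC : A = C
  · subst hAC
    by_cases heD : e ∈ E D
    · exact mem_union_right _ (mem_biUnion.mpr ⟨D, mem_erase.mpr ⟨hCD.symm, hD⟩, heD⟩)
    · exact mem_union_left _ (mem_sdiff.mpr ⟨heA, heD⟩)
  · exact mem_union_right _ (mem_biUnion.mpr ⟨A, mem_erase.mpr ⟨hAC, hA⟩, heA⟩)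

lemma card_biUnion_le_sum_sub_of_pairwise (f : α → ℤ) (P : α → Prop)
    (hsingle : ∀ A, P A → (#(E A) : ℤ) ≤ f A)
    (hpair : ∀ A B, P A → P B → A ≠ B →
      (#(E A \ E B) : ℤ) ≤ f A - 2 ∨ (#(E B \ E A) : ℤ) ≤ f B - 2)
    (𝒳 : Finset α) (hne : 𝒳.Nonempty) (hP : ∀ A ∈ 𝒳, P A) :
    (#(𝒳.biUnion E) : ℤ) ≤ ∑ A ∈ 𝒳, f A - 2 * ((#𝒳 : ℤ) - 1) := by
  induction 𝒳 using Finset.strongInduction with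
  | H 𝒳 ih =>
  obtain ⟨A, rfl⟩ | ⟨C, hC, D, hD, hCD⟩ := hne.exists_eq_singleton_or_nontrivial
  · simpa using hsingle A (hP A (mem_singleton_self A))
  have peel : ∀ C ∈ 𝒳, ∀ D ∈ 𝒳, C ≠ D → (#(E C \ E D) : ℤ) ≤ f C - 2 →
      (#(𝒳.biUnion E) : ℤ) ≤ ∑ A ∈ 𝒳, f A - 2 * ((#𝒳 : ℤ) - 1) := by
    intro C hC D hD hCD hkey
    have hrest := ih (𝒳.erase C) (erase_ssubset hC) ⟨D, mem_erase.mpr ⟨hCD.symm, hD⟩⟩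
      fun A hA => hP A (mem_of_mem_erase hA)
    have hsplit := card_biUnion_le_card_sdiff_add_card_biUnion_erase E hD hCD
    have hsum := add_sum_erase 𝒳 f hC
    have hcard := card_erase_add_one hC
    linarith
  rcases hpair C D (hP C hC) (hP D hD) hCD with hkey | hkey
  · exact peel C hC D hD hCD hkey
  · exact peel D hD C hC hCD.symm hkey

end Peeling

noncomputable def inducedEdges {V : Type*} [Fintype V] (G : SimpleGraph V) (U : Finset V) :
    Finset (Sym2 V) :=
  G.edgeFinset.filter (fun e => ∀ x ∈ e, x ∈ U)

theorem uvSparse_of_pairwise {V : Type*} [Fintype V] [DecidableEq V] (G : SimpleGraph V)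
    (u v : V)
    (hsingle : ∀ U : Finset V, 2 ≤ #U → (iG G U : ℤ) ≤ valU u v U)
    (hpair : ∀ A B : Finset V, u ∈ A → v ∈ A → 3 ≤ #A → u ∈ B → v ∈ B → 3 ≤ #B → A ≠ B →
      (#(inducedEdges G A \ inducedEdges G B) : ℤ) ≤ valU u v A - 2 ∨
      (#(inducedEdges G B \ inducedEdges G A) : ℤ) ≤ valU u v B - 2) :
    UVSparse G u v := by
  refine ⟨hsingle, fun 𝒳 ⟨hne, hmem⟩ => ?_⟩
  rw [iFam, valFam]
  convert card_biUnion_le_sum_sub_of_pairwise (inducedEdges G) (valU u v)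
    (fun A => u ∈ A ∧ v ∈ A ∧ 3 ≤ #A) (fun A ⟨_, _, hA⟩ => hsingle A (by omega))
    (fun A B ⟨hAu, hAv, hA⟩ ⟨hBu, hBv, hB⟩ => hpair A B hAu hAv hA hBu hBv hB) 𝒳 hne hmem
  unfold inducedEdges
  congr!

def twoK4 : SimpleGraph (Fin 7) := SimpleGraph.fromRel
  (fun i j => ({i, j} : Set (Fin 7)) ⊆ {0, 1, 2, 3} ∨ ({i, j} : Set (Fin 7)) ⊆ {0, 4, 5, 6})

def twoK4Edges : Finset (Sym2 (Fin 7)) :=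
  {s(0, 1), s(0, 2), s(0, 3), s(1, 2), s(1, 3), s(2, 3),
   s(0, 4), s(0, 5), s(0, 6), s(4, 5), s(4, 6), s(5, 6)}

lemma twoK4_edgeFinset : twoK4.edgeFinset = twoK4Edges := by
  ext e
  induction e with
  | h a b =>
    rw [SimpleGraph.mem_edgeFinset, SimpleGraph.mem_edgeSet, twoK4, SimpleGraph.fromRel_adj]
    simp only [Set.subset_def, Set.mem_insert_iff, Set.mem_singleton_iff]
    fin_cases a <;> fin_cases b <;> decide

lemma inducedEdges_twoK4 (U : Finset (Fin 7)) :
    inducedEdges twoK4 U = twoK4Edges.filter (· ∈ U.sym2) := by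
  ext e
  simp only [inducedEdges, twoK4_edgeFinset, mem_filter, mem_sym2_iff]

set_option maxRecDepth 10000 in
lemma card_twoK4Edges_filter_le_valU (U : Finset (Fin 7)) (hU : 2 ≤ #U) :
    (#(twoK4Edges.filter (· ∈ U.sym2)) : ℤ) ≤ valU 1 4 U := by
  revert U; decide

set_option maxRecDepth 100000 in
lemma card_twoK4Edges_filter_sdiff_le_valU_sub_two (A B : Finset (Fin 7))
    (hA1 : 1 ∈ A) (hA4 : 4 ∈ A) (hA : 3 ≤ #A)
    (hB1 : 1 ∈ B) (hB4 : 4 ∈ B) (hB : 3 ≤ #B) (hAB : A ≠ B) :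
    (#(twoK4Edges.filter (· ∈ A.sym2) \ twoK4Edges.filter (· ∈ B.sym2)) : ℤ)
        ≤ valU 1 4 A - 2 ∨
      (#(twoK4Edges.filter (· ∈ B.sym2) \ twoK4Edges.filter (· ∈ A.sym2)) : ℤ)
        ≤ valU 1 4 B - 2 := by
  revert A B; decide

/-- The graph consisting of two copies of `K₄` meeting in a single vertex `x = 0`,
with `u = 1` in one copy and `v = 4` in the other, is `uv`-tight: it is `uv`-sparse
with exactly `2|V| - 2 = 12` edges on its 7 vertices. -/
theorem two_K4_sharing_vertex_uv_tight :
    let G : SimpleGraph (Fin 7) := SimpleGraph.fromRel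
      (fun i j => ({i, j} : Set (Fin 7)) ⊆ {0, 1, 2, 3} ∨
                  ({i, j} : Set (Fin 7)) ⊆ {0, 4, 5, 6})
    UVSparse G (1 : Fin 7) (4 : Fin 7) ∧
      G.edgeFinset.card = 2 * Fintype.card (Fin 7) - 2 ∧
      G.edgeFinset.card = 12 := by
  suffices h : UVSparse twoK4 1 4 ∧ #twoK4.edgeFinset = 2 * Fintype.card (Fin 7) - 2 ∧
      #twoK4.edgeFinset = 12 by convert h <;> rfl
  have hcard : #twoK4.edgeFinset = 12 := by rw [twoK4_edgeFinset]; decide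
  refine ⟨uvSparse_of_pairwise twoK4 1 4 (fun U hU => ?_) (fun A B => ?_), by simp [hcard], hcard⟩
  · rw [iG, ← inducedEdges, inducedEdges_twoK4]
    exact card_twoK4Edges_filter_le_valU U hU
  · simp only [inducedEdges_twoK4]
    exact card_twoK4Edges_filter_sdiff_le_valU_sub_two A B
end

section
/- Let X be a normed plane in which the only trivial infinitesimal flexes of any framework are translations. If (G₁,p₁) and (G₂,p₂) are infinitesimally rigid well-positioned frameworks in X sharing exactly one vertex w with p₁(w) = p₂(w), then the framework (G₁ ∪ G₂, p₁ ∪ p₂) on the union graph is infinitesimally rigid, i.e., its only infinitesimal flexes are translations. -/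
/-- A framework `(G, p)` is well-positioned if every edge direction is a smooth point. -/
def WellPositioned {V X : Type*} [NormedAddCommGroup X] [NormedSpace ℝ X]
    (G : SimpleGraph V) (p : V → X) : Prop :=
  ∀ x y, G.Adj x y → IsSmoothPoint (p x - p y)

/-- The space of infinitesimal flexes of the framework `(G, p)`: those `μ : V → X` with
`φ_{p x - p y} (μ x - μ y) = 0` for every edge `xy`.  This is the kernel of the
rigidity matrix `R(G, p)`. -/
def flexSpace {V X : Type*} [NormedAddCommGroup X] [NormedSpace ℝ X]
    (G : SimpleGraph V) (p : V → X) : Submodule ℝ (V → X) where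
  carrier := {μ | ∀ x y, G.Adj x y → ∀ f : X →ₗ[ℝ] ℝ,
    IsSupportFunctional f (p x - p y) → f (μ x - μ y) = 0}
  add_mem' := by
    intro a b ha hb x y hxy f hf
    have h1 := ha x y hxy f hf
    have h2 := hb x y hxy f hf
    have h : (a + b) x - (a + b) y = (a x - a y) + (b x - b y) := by
      simp only [Pi.add_apply]; abel
    rw [h, map_add, h1, h2, add_zero]
  zero_mem' := by
    intro x y hxy f hf
    simp
  smul_mem' := by
    intro c a ha x y hxy f hf
    have h1 := ha x y hxy f hf
    have h : (c • a) x - (c • a) y = c • (a x - a y) := by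
      simp [smul_sub]
    rw [h, map_smul, h1, smul_zero]

open Module

/-- Gluing two infinitesimally rigid frameworks in a normed plane (where the trivial
infinitesimal flexes are exactly the translations) along a single common vertex yields
an infinitesimally rigid framework: every infinitesimal flex of the union is a
translation. -/
theorem union_of_rigid_frameworks_sharing_vertex_rigid
    {V X : Type*} [NormedAddCommGroup X] [NormedSpace ℝ X]
    (hplane : finrank ℝ X = 2)
    (S₁ S₂ : Set V) (w : V) (hw : S₁ ∩ S₂ = {w}) (hcover : S₁ ∪ S₂ = Set.univ)
    (G₁ : SimpleGraph S₁) (G₂ : SimpleGraph S₂) (p : V → X)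
    (hwp₁ : WellPositioned G₁ (fun a => p a.1))
    (hwp₂ : WellPositioned G₂ (fun a => p a.1))
    (hrig₁ : ∀ μ ∈ flexSpace G₁ (fun a => p a.1), ∃ c : X, μ = fun _ => c)
    (hrig₂ : ∀ μ ∈ flexSpace G₂ (fun a => p a.1), ∃ c : X, μ = fun _ => c) :
    ∀ μ ∈ flexSpace
        (SimpleGraph.fromRel (fun x y =>
          (∃ hx : x ∈ S₁, ∃ hy : y ∈ S₁, G₁.Adj ⟨x, hx⟩ ⟨y, hy⟩) ∨
          (∃ hx : x ∈ S₂, ∃ hy : y ∈ S₂, G₂.Adj ⟨x, hx⟩ ⟨y, hy⟩))) p,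
      ∃ c : X, μ = fun _ => c := by
  intro μ hμ
  have hres : ∀ (S : Set V) (G : SimpleGraph S),
      (∀ x y : S, G.Adj x y →
        ((∃ hx : x.1 ∈ S₁, ∃ hy : y.1 ∈ S₁, G₁.Adj ⟨x.1, hx⟩ ⟨y.1, hy⟩) ∨
         (∃ hx : x.1 ∈ S₂, ∃ hy : y.1 ∈ S₂, G₂.Adj ⟨x.1, hx⟩ ⟨y.1, hy⟩))) →
      (fun a : S => μ a.1) ∈ flexSpace G (fun a : S => p a.1) := by
    intro S G hG x y hxy f hf
    have hne : x.1 ≠ y.1 := fun h => G.ne_of_adj hxy (Subtype.ext h)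
    have hadj : (SimpleGraph.fromRel (fun x y =>
          (∃ hx : x ∈ S₁, ∃ hy : y ∈ S₁, G₁.Adj ⟨x, hx⟩ ⟨y, hy⟩) ∨
          (∃ hx : x ∈ S₂, ∃ hy : y ∈ S₂, G₂.Adj ⟨x, hx⟩ ⟨y, hy⟩))).Adj x.1 y.1 :=
      ⟨hne, Or.inl (hG x y hxy)⟩
    exact hμ x.1 y.1 hadj f hf
  obtain ⟨c₁, hc₁⟩ := hrig₁ _ (hres S₁ G₁ (fun x y h => Or.inl ⟨x.2, y.2, h⟩))
  obtain ⟨c₂, hc₂⟩ := hrig₂ _ (hres S₂ G₂ (fun x y h => Or.inr ⟨x.2, y.2, h⟩))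
  have hwmem : w ∈ S₁ ∩ S₂ := hw ▸ rfl
  have h1 : ∀ a : V, a ∈ S₁ → μ a = c₁ := fun a ha => congrFun hc₁ ⟨a, ha⟩
  have h2 : ∀ a : V, a ∈ S₂ → μ a = c₂ := fun a ha => congrFun hc₂ ⟨a, ha⟩
  have hcc : c₁ = c₂ := by
    rw [← h1 w hwmem.1, h2 w hwmem.2]
  refine ⟨c₁, funext fun a => ?_⟩
  have : a ∈ S₁ ∪ S₂ := hcover ▸ Set.mem_univ a
  rcases this with h | h
  · exact h1 a h
  · rw [h2 a h, hcc]
end
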